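/- arXiv:1910.04833 — 2 statements merged into one kernel-verified Lean document; each statement's English description precedes it below -/
import Mathlib

section
/- For positive definite n×n matrices A and B, Tr((A^(1/2) B A^(1/2))^(1/2)) ≥ Tr(A^(1/2) B^(1/2)); consequently the Bures-Wasserstein distance d_b(A,B) = (Tr(A+B) - 2Tr((A^(1/2)BA^(1/2))^(1/2)))^(1/2) is at most the Hellinger distance d_h(A,B) = (Tr(A+B) - 2Tr(A^(1/2)B^(1/2)))^(1/2). -/
open Matrix ComplexOrder

/-- Matrix power via functional calculus (spectral decomposition), for Hermitian matrices. -/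
noncomputable def mpow {n : Type*} [Fintype n] [DecidableEq n]
    (A : Matrix n n ℂ) (p : ℝ) : Matrix n n ℂ :=
  if hA : A.IsHermitian then
    (hA.eigenvectorUnitary : Matrix n n ℂ) *
      Matrix.diagonal (fun i => ((hA.eigenvalues i ^ p : ℝ) : ℂ)) *
      star (hA.eigenvectorUnitary : Matrix n n ℂ)
  else 0

/-- Hellinger distance. -/
noncomputable def dh {n : Type*} [Fintype n] [DecidableEq n]
    (A B : Matrix n n ℂ) : ℝ :=
  Real.sqrt ((Matrix.trace (A + B)).re
    - 2 * (Matrix.trace (mpow A (1/2) * mpow B (1/2))).re)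

/-- Bures–Wasserstein distance. -/
noncomputable def db {n : Type*} [Fintype n] [DecidableEq n]
    (A B : Matrix n n ℂ) : ℝ :=
  Real.sqrt ((Matrix.trace (A + B)).re
    - 2 * (Matrix.trace (mpow (mpow A (1/2) * B * mpow A (1/2)) (1/2))).re)

/-- Log-determinant distance. -/
noncomputable def dl {n : Type*} [Fintype n] [DecidableEq n]
    (A B : Matrix n n ℂ) : ℝ :=
  Real.log (((A + B) / 2).det).re
    - (1/2) * (Real.log (A.det.re) + Real.log (B.det.re))

/-- Matrix power mean μ_p(t;A,B) = (t A^p + (1-t) B^p)^{1/p}. -/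
noncomputable def mpm {n : Type*} [Fintype n] [DecidableEq n]
    (p t : ℝ) (A B : Matrix n n ℂ) : Matrix n n ℂ :=
  mpow ((t : ℂ) • mpow A p + ((1 - t : ℝ) : ℂ) • mpow B p) (1/p)

/-- Weighted geometric mean A ♯_t B. -/
noncomputable def sharp {n : Type*} [Fintype n] [DecidableEq n]
    (t : ℝ) (A B : Matrix n n ℂ) : Matrix n n ℂ :=
  mpow A (1/2) * mpow (mpow A (-(1/2)) * B * mpow A (-(1/2))) t * mpow A (1/2)

/-- Quantum fidelity. -/
noncomputable def fid {n : Type*} [Fintype n] [DecidableEq n]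
    (A B : Matrix n n ℂ) : ℝ :=
  ((Matrix.trace (mpow (mpow A (1/2) * B * mpow A (1/2)) (1/2))).re) ^ 2

/-! Put `X = A^{1/2} B^{1/2}`, so that `X Xᴴ = A^{1/2} B A^{1/2} =: M` and the first claim reads
`Re tr X ≤ tr M^{1/2}`. Factor `X = M^{1/4} (M^{-1/4} X)`: both factors have squared
Hilbert–Schmidt norm `tr M^{1/2}`, so Cauchy–Schwarz for the trace pairing gives
`|tr X| ≤ tr M^{1/2}`. The comparison of distances then follows from monotonicity of `√`. -/

section

variable {n : Type*} [Fintype n] [DecidableEq n]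

lemma mpow_of_isHermitian {A : Matrix n n ℂ} (hA : A.IsHermitian) (p : ℝ) :
    mpow A p = (hA.eigenvectorUnitary : Matrix n n ℂ) *
      diagonal (fun i => ((hA.eigenvalues i ^ p : ℝ) : ℂ)) *
      star (hA.eigenvectorUnitary : Matrix n n ℂ) := dif_pos hA

lemma isHermitian_mpow (A : Matrix n n ℂ) (p : ℝ) : (mpow A p).IsHermitian := by
  by_cases hA : A.IsHermitian
  · rw [mpow_of_isHermitian hA, star_eq_conjTranspose]
    exact isHermitian_mul_mul_conjTranspose _
      (isHermitian_diagonal_of_self_adjoint _ (funext fun i => Complex.conj_ofReal _))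
  · simp [mpow, hA]

lemma posDef_mpow {A : Matrix n n ℂ} (hA : A.PosDef) (p : ℝ) : (mpow A p).PosDef := by
  rw [mpow_of_isHermitian hA.1, IsUnit.posDef_star_right_conjugate_iff Unitary.isUnit_coe,
    posDef_diagonal_iff]
  exact fun i => mod_cast Real.rpow_pos_of_pos (hA.eigenvalues_pos i) p

lemma mpow_mul_mpow {A : Matrix n n ℂ} (hA : A.PosDef) (p q : ℝ) :
    mpow A p * mpow A q = mpow A (p + q) := by
  simp only [mpow_of_isHermitian hA.1, mul_assoc]
  rw [← mul_assoc (star _), Unitary.coe_star_mul_self, one_mul, ← mul_assoc (diagonal _),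
    diagonal_mul_diagonal]
  simp_rw [← Complex.ofReal_mul, ← Real.rpow_add (hA.eigenvalues_pos _)]

lemma mpow_zero {A : Matrix n n ℂ} (hA : A.IsHermitian) : mpow A 0 = 1 := by
  simp [mpow_of_isHermitian hA]

lemma mpow_one {A : Matrix n n ℂ} (hA : A.IsHermitian) : mpow A 1 = A := by
  rw [mpow_of_isHermitian hA]
  simp only [Real.rpow_one]
  exact hA.spectral_theorem.symm

lemma norm_trace_mul_le (P Q : Matrix n n ℂ) :
    ‖trace (P * Q)‖ ≤ √(trace (Pᴴ * P)).re * √(trace (Qᴴ * Q)).re := by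
  -- the Hilbert–Schmidt inner product `⟪x, y⟫ = tr (y xᴴ)`, induced by the identity matrix
  let _ := toMatrixSeminormedAddCommGroup (1 : Matrix n n ℂ) PosSemidef.one
  let _ := toMatrixInnerProductSpace (1 : Matrix n n ℂ) PosSemidef.one
  have h := norm_inner_le_norm (𝕜 := ℂ) Pᴴ Q
  rw [norm_eq_sqrt_re_inner (𝕜 := ℂ) Pᴴ, norm_eq_sqrt_re_inner (𝕜 := ℂ) Q] at h
  change ‖trace (Q * 1 * Pᴴᴴ)‖ ≤ √(trace (Pᴴ * 1 * Pᴴᴴ)).re * √(trace (Q * 1 * Qᴴ)).re at h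
  simpa [trace_mul_comm Q, trace_mul_comm Q Qᴴ] using h

lemma norm_trace_le_re_trace_mpow_mul_conjTranspose {X : Matrix n n ℂ} (hX : (X * Xᴴ).PosDef) :
    ‖trace X‖ ≤ (trace (mpow (X * Xᴴ) (1/2))).re := by
  set M := X * Xᴴ
  have hsplit : mpow M (1/4) * (mpow M (-(1/4)) * X) = X := by
    rw [← mul_assoc, mpow_mul_mpow hX, add_neg_cancel, mpow_zero hX.1, one_mul]
  have hleft : trace ((mpow M (1/4))ᴴ * mpow M (1/4)) = trace (mpow M (1/2)) := by
    rw [(isHermitian_mpow _ _).eq, mpow_mul_mpow hX]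
    norm_num
  have hright : trace ((mpow M (-(1/4)) * X)ᴴ * (mpow M (-(1/4)) * X))
      = trace (mpow M (1/2)) := by
    calc trace ((mpow M (-(1/4)) * X)ᴴ * (mpow M (-(1/4)) * X))
        = trace (mpow M (-(1/4)) * mpow M (-(1/4)) * M) := by
          rw [conjTranspose_mul, (isHermitian_mpow _ _).eq, Matrix.mul_assoc, trace_mul_comm]
          simp only [Matrix.mul_assoc, M]
      _ = trace (mpow M (-(1/4)) * mpow M (-(1/4)) * mpow M 1) := by rw [mpow_one hX.1]
      _ = trace (mpow M (1/2)) := by rw [mpow_mul_mpow hX, mpow_mul_mpow hX]; norm_num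
  have hnonneg : 0 ≤ (trace (mpow M (1/2))).re :=
    (RCLike.nonneg_iff.mp (posDef_mpow hX _).posSemidef.trace_nonneg).1
  calc ‖trace X‖ = ‖trace (mpow M (1/4) * (mpow M (-(1/4)) * X))‖ := by rw [hsplit]
    _ ≤ _ := norm_trace_mul_le _ _
    _ = (trace (mpow M (1/2))).re := by rw [hleft, hright, Real.mul_self_sqrt hnonneg]

end

theorem stmt6 {n : Type*} [Fintype n] [DecidableEq n]
    {A B : Matrix n n ℂ} (hA : A.PosDef) (hB : B.PosDef) :
    (Matrix.trace (mpow (mpow A (1/2) * B * mpow A (1/2)) (1/2))).re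
      ≥ (Matrix.trace (mpow A (1/2) * mpow B (1/2))).re
    ∧ db A B ≤ dh A B := by
  set X := mpow A (1/2) * mpow B (1/2)
  have hB_sq : mpow B (1/2) * mpow B (1/2) = B := by
    rw [mpow_mul_mpow hB, add_halves, mpow_one hB.1]
  have hXX : X * Xᴴ = mpow A (1/2) * B * mpow A (1/2) := by
    rw [conjTranspose_mul, (isHermitian_mpow _ _).eq, (isHermitian_mpow _ _).eq, mul_assoc,
      ← mul_assoc (mpow B _), hB_sq, mul_assoc]
  have hX : (X * Xᴴ).PosDef := PosDef.mul_conjTranspose_self X <|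
    vecMul_injective_of_isUnit ((posDef_mpow hA _).isUnit.mul (posDef_mpow hB _).isUnit)
  have htrace : (trace X).re ≤ (trace (mpow (X * Xᴴ) (1/2))).re :=
    (Complex.re_le_norm _).trans (norm_trace_le_re_trace_mpow_mul_conjTranspose hX)
  rw [hXX] at htrace
  exact ⟨htrace, Real.sqrt_le_sqrt (by linarith)⟩
end

section
/- For positive definite n×n matrices A and B with trace one (density matrices), 2Tr((A^(1/2) B A^(1/2))^(1/2)) ≤ Tr(A)^(1/2)Tr(B)^(1/2) + Tr(A^(1/2)B^(1/2)) ≤ (1/2)Tr(A+B) + Tr(A^(1/2)B^(1/2)). -/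
open Matrix ComplexOrder

/-!
Write `R = A^{1/2}`, `Q = B^{1/2}`. By polar decomposition of the invertible matrix `Q R` there is a
unitary `V` with `V^* Q R = |Q R| = (R B R)^{1/2}`. Cauchy–Schwarz for the Frobenius inner product,
applied to `Q^{1/2} V R^{1/2}` and `Q^{1/2} R^{1/2}` and then to `V^* Q V` and `R`, gives
`Tr (R B R)^{1/2} ≤ (Tr A · Tr B)^{1/4} · Tr (R Q)^{1/2}`, and AM–GM finishes.
-/

lemma two_mul_sqrt_mul_sqrt_le_add {x y : ℝ} (hx : 0 ≤ x) (hy : 0 ≤ y) :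
    2 * (√x * √y) ≤ x + y := by
  have h := two_mul_le_add_sq √x √y
  rwa [Real.sq_sqrt hx, Real.sq_sqrt hy, mul_assoc] at h

namespace Matrix

section Frobenius

variable {𝕜 m n : Type*} [RCLike 𝕜] [Fintype m] [Fintype n]

lemma inner_toLp_eq_trace_conjTranspose_mul (X Y : Matrix m n 𝕜) :
    inner 𝕜 (WithLp.toLp 2 fun p : m × n => X p.1 p.2) (WithLp.toLp 2 fun p : m × n => Y p.1 p.2)
      = trace (Xᴴ * Y) := by
  simp only [PiLp.inner_apply, RCLike.inner_apply, trace, diag_apply, mul_apply,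
    conjTranspose_apply, Fintype.sum_prod_type]
  rw [Finset.sum_comm]
  simp [mul_comm]

lemma re_trace_conjTranspose_mul_le (X Y : Matrix m n 𝕜) :
    RCLike.re (trace (Xᴴ * Y)) ≤
      √(RCLike.re (trace (Xᴴ * X))) * √(RCLike.re (trace (Yᴴ * Y))) := by
  simp only [← inner_toLp_eq_trace_conjTranspose_mul, ← norm_eq_sqrt_re_inner]
  exact re_inner_le_norm _ _

end Frobenius

open scoped MatrixOrder

variable {n : Type*} [Fintype n] [DecidableEq n]

lemma IsHermitian.mpow_eq_cfc {A : Matrix n n ℂ} (hA : A.IsHermitian) (p : ℝ) :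
    mpow A p = cfc (· ^ p : ℝ → ℝ) A := by
  rw [mpow, dif_pos hA, hA.cfc_eq, IsHermitian.cfc, Unitary.conjStarAlgAut_apply]
  rfl

lemma PosSemidef.mpow_one_half {A : Matrix n n ℂ} (hA : A.PosSemidef) :
    mpow A (1 / 2) = CFC.sqrt A := by
  rw [hA.isHermitian.mpow_eq_cfc, CFC.sqrt_eq_real_sqrt A hA.nonneg, cfcₙ_eq_cfc]
  exact cfc_congr fun x _ => by simp [Real.sqrt_eq_rpow]

lemma PosDef.sqrt {A : Matrix n n ℂ} (hA : A.PosDef) : (CFC.sqrt A).PosDef :=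
  (IsStrictlyPositive.sqrt A hA.isStrictlyPositive).posDef

lemma PosSemidef.sqrt_mul_mul_sqrt {B : Matrix n n ℂ} (hB : B.PosSemidef) (A : Matrix n n ℂ) :
    (CFC.sqrt A * B * CFC.sqrt A).PosSemidef := by
  simpa only [(CFC.sqrt_nonneg A).posSemidef.isHermitian.eq] using
    hB.conjTranspose_mul_mul_same (CFC.sqrt A)

lemma PosSemidef.trace_mul_nonneg {A B : Matrix n n ℂ} (hA : A.PosSemidef)
    (hB : B.PosSemidef) : 0 ≤ trace (A * B) := by
  have hb : (CFC.sqrt B)ᴴ = CFC.sqrt B := (CFC.sqrt_nonneg B).posSemidef.isHermitian.eq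
  have h := (hA.conjTranspose_mul_mul_same (CFC.sqrt B)).trace_nonneg
  rwa [hb, trace_mul_cycle, CFC.sqrt_mul_sqrt_self B hB.nonneg, trace_mul_comm] at h

lemma exists_unitary_conjTranspose_mul_eq_sqrt {M : Matrix n n ℂ} (hM : IsUnit M) :
    ∃ V ∈ unitaryGroup n ℂ, Vᴴ * M = CFC.sqrt (Mᴴ * M) := by
  set S := CFC.sqrt (Mᴴ * M)
  have hMM : (Mᴴ * M).PosDef :=
    (posSemidef_conjTranspose_mul_self M).posDef_iff_isUnit.mpr (hM.star.mul hM)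
  have hSS : S * S = Mᴴ * M := CFC.sqrt_mul_sqrt_self _ hMM.posSemidef.nonneg
  have hSdet : IsUnit S.det := (isUnit_iff_isUnit_det S).mp hMM.sqrt.isUnit
  have hSinvH : (S⁻¹)ᴴ = S⁻¹ := by rw [conjTranspose_nonsing_inv, hMM.sqrt.isHermitian.eq]
  refine ⟨M * S⁻¹, mem_unitaryGroup_iff'.mpr ?_, ?_⟩
  · rw [star_eq_conjTranspose, conjTranspose_mul, hSinvH, mul_assoc, ← mul_assoc Mᴴ, ← hSS,
      ← mul_assoc S⁻¹, ← mul_assoc, nonsing_inv_mul S hSdet, one_mul, mul_nonsing_inv S hSdet]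
  · rw [conjTranspose_mul, hSinvH, mul_assoc, ← hSS, ← mul_assoc, nonsing_inv_mul S hSdet,
      one_mul]

lemma re_trace_conjTranspose_unitary_mul_le {R Q V : Matrix n n ℂ} (hR : R.PosSemidef)
    (hQ : Q.PosSemidef) (hV : V ∈ unitaryGroup n ℂ) :
    (trace (Vᴴ * (Q * R))).re ≤
      √(√(trace (R * R)).re * √(trace (Q * Q)).re) * √(trace (R * Q)).re := by
  obtain ⟨r, hr, rfl⟩ : ∃ r : Matrix n n ℂ, rᴴ = r ∧ r * r = R :=
    ⟨CFC.sqrt R, (CFC.sqrt_nonneg R).posSemidef.isHermitian.eq, CFC.sqrt_mul_sqrt_self R hR.nonneg⟩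
  obtain ⟨q, hq, rfl⟩ : ∃ q : Matrix n n ℂ, qᴴ = q ∧ q * q = Q :=
    ⟨CFC.sqrt Q, (CFC.sqrt_nonneg Q).posSemidef.isHermitian.eq, CFC.sqrt_mul_sqrt_self Q hQ.nonneg⟩
  have hVV : V * Vᴴ = 1 := Unitary.mul_star_self_of_mem hV
  set W := Vᴴ * (q * q) * V
  have hW : Wᴴ = W := by
    simp only [W, conjTranspose_mul, hq, conjTranspose_conjTranspose, mul_assoc]
  have hWW : trace (Wᴴ * W) = trace (q * q * (q * q)) := by
    have hVV' : ∀ X, V * (Vᴴ * X) = X := fun X => by rw [← mul_assoc, hVV, one_mul]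
    rw [hW]
    simp only [W, mul_assoc, hVV']
    rw [trace_mul_comm]
    simp only [mul_assoc, hVV, mul_one]
  set X := q * V * r
  set Y := q * r
  have hXY : trace (Xᴴ * Y) = trace (Vᴴ * (q * q * (r * r))) := by
    simp only [X, Y, conjTranspose_mul, hq, hr, mul_assoc]
    rw [trace_mul_comm]
    simp only [mul_assoc]
  have hXX : trace (Xᴴ * X) = trace (Wᴴ * (r * r)) := by
    simp only [X, conjTranspose_mul, hq, hr, hW, mul_assoc]
    rw [trace_mul_comm]
    simp only [W, mul_assoc]
  have hYY : trace (Yᴴ * Y) = trace (r * r * (q * q)) := by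
    rw [trace_mul_comm (r * r)]
    simp only [Y, conjTranspose_mul, hq, hr, mul_assoc]
    rw [trace_mul_comm]
    simp only [mul_assoc]
  have cs := re_trace_conjTranspose_mul_le X Y
  have cs' := re_trace_conjTranspose_mul_le W (r * r)
  rw [hWW, hR.isHermitian.eq] at cs'
  rw [hXY, hXX, hYY] at cs
  exact cs.trans (mul_le_mul_of_nonneg_right (Real.sqrt_le_sqrt (cs'.trans_eq (mul_comm _ _)))
    (Real.sqrt_nonneg _))

theorem PosDef.two_mul_re_trace_sqrt_conj_le {A B : Matrix n n ℂ} (hA : A.PosDef)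
    (hB : B.PosDef) :
    2 * (trace (CFC.sqrt (CFC.sqrt A * B * CFC.sqrt A))).re ≤
      √(trace A).re * √(trace B).re + (trace (CFC.sqrt A * CFC.sqrt B)).re := by
  have hR := hA.sqrt
  have hQ := hB.sqrt
  set R := CFC.sqrt A
  set Q := CFC.sqrt B
  have hRR : R * R = A := CFC.sqrt_mul_sqrt_self A hA.posSemidef.nonneg
  have hQQ : Q * Q = B := CFC.sqrt_mul_sqrt_self B hB.posSemidef.nonneg
  have hM : (Q * R)ᴴ * (Q * R) = R * B * R := by
    rw [conjTranspose_mul, hR.isHermitian.eq, hQ.isHermitian.eq, mul_assoc, ← mul_assoc Q, hQQ,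
      mul_assoc]
  obtain ⟨V, hV, hVM⟩ := exists_unitary_conjTranspose_mul_eq_sqrt (hQ.isUnit.mul hR.isUnit)
  have key := re_trace_conjTranspose_unitary_mul_le hR.posSemidef hQ.posSemidef hV
  rw [hVM, hM, hRR, hQQ] at key
  have ha : 0 ≤ (trace (R * Q)).re :=
    (Complex.nonneg_iff.mp (hR.posSemidef.trace_mul_nonneg hQ.posSemidef)).1
  calc 2 * (trace (CFC.sqrt (R * B * R))).re
      ≤ 2 * (√(√(trace A).re * √(trace B).re) * √(trace (R * Q)).re) := by gcongr
    _ ≤ √(trace A).re * √(trace B).re + (trace (R * Q)).re :=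
      two_mul_sqrt_mul_sqrt_le_add (by positivity) ha

end Matrix

theorem stmt8_general {n : Type*} [Fintype n] [DecidableEq n]
    {A B : Matrix n n ℂ} (hA : A.PosDef) (hB : B.PosDef) :
    2 * (Matrix.trace (mpow (mpow A (1/2) * B * mpow A (1/2)) (1/2))).re
      ≤ Real.sqrt (Matrix.trace A).re * Real.sqrt (Matrix.trace B).re
          + (Matrix.trace (mpow A (1/2) * mpow B (1/2))).re
    ∧ Real.sqrt (Matrix.trace A).re * Real.sqrt (Matrix.trace B).re
          + (Matrix.trace (mpow A (1/2) * mpow B (1/2))).re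
      ≤ (1/2) * (Matrix.trace (A + B)).re
          + (Matrix.trace (mpow A (1/2) * mpow B (1/2))).re := by
  have hA0 : 0 ≤ (trace A).re := (Complex.nonneg_iff.mp hA.posSemidef.trace_nonneg).1
  have hB0 : 0 ≤ (trace B).re := (Complex.nonneg_iff.mp hB.posSemidef.trace_nonneg).1
  rw [hA.posSemidef.mpow_one_half, hB.posSemidef.mpow_one_half,
    (hB.posSemidef.sqrt_mul_mul_sqrt A).mpow_one_half]
  refine ⟨hA.two_mul_re_trace_sqrt_conj_le hB, ?_⟩
  rw [trace_add, Complex.add_re]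
  linarith [two_mul_sqrt_mul_sqrt_le_add hA0 hB0]

theorem stmt8 {n : Type*} [Fintype n] [DecidableEq n]
    {A B : Matrix n n ℂ} (hA : A.PosDef) (hB : B.PosDef)
    (hA1 : Matrix.trace A = 1) (hB1 : Matrix.trace B = 1) :
    2 * (Matrix.trace (mpow (mpow A (1/2) * B * mpow A (1/2)) (1/2))).re
      ≤ Real.sqrt (Matrix.trace A).re * Real.sqrt (Matrix.trace B).re
          + (Matrix.trace (mpow A (1/2) * mpow B (1/2))).re
    ∧ Real.sqrt (Matrix.trace A).re * Real.sqrt (Matrix.trace B).re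
          + (Matrix.trace (mpow A (1/2) * mpow B (1/2))).re
      ≤ (1/2) * (Matrix.trace (A + B)).re
          + (Matrix.trace (mpow A (1/2) * mpow B (1/2))).re :=
  stmt8_general hA hB
end
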